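/- For integers d and e with 1 < e < d − 1, the third simple root annihilates the Kostant vector, i.e. Σ_{t=1}^{e} (−1)^t C(e,t) C(e,t−1) · 2^{⌊e−t} · (d−4)^{⌊t−1} = 0, if and only if e⁴ − 6de² + 2e³ + 6d² − 6de + 11e² − 18d + 10e + 12 = 0. Equivalently, since 2^{⌊e−t} vanishes unless e − t ∈ {0,1,2}, the alternating sum reduces to p(e,e) − p(e,e−1) + p(e,e−2) where p(e,t) = C(e,t)C(e,t−1) 2^{⌊e−t}(d−4)^{⌊t−1}, and after dividing by the common factor e·(d−4)^{⌊e−3} one obtains (d−e−1)(d−e−2) − e(e−1)(d−e−1) + e(e−1)²(e−2)/6 = 0, which is the stated quartic in (d,e). -/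
import Mathlib


/-- The falling factorial `z^{⌊k} = z (z-1) ⋯ (z-k+1)`, with `z^{⌊0} = 1`. -/
noncomputable def ffall (z : ℝ) (k : ℕ) : ℝ := ∏ i ∈ Finset.range k, (z - i)

lemma ffall_succ (z : ℝ) (k : ℕ) : ffall z (k + 1) = ffall z k * (z - k) :=
  Finset.prod_range_succ _ _

lemma ffall_zero (z : ℝ) : ffall z 0 = 1 := Finset.prod_range_zero _

lemma ffall_two_eq_zero {k : ℕ} (hk : 3 ≤ k) : ffall 2 k = 0 := by
  apply Finset.prod_eq_zero (i := 2) (by simpa [Finset.mem_range] using by omega)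
  norm_num

lemma ffall_pos {z : ℝ} {k : ℕ} (h : ∀ i : ℕ, i < k → 0 < z - i) : 0 < ffall z k :=
  Finset.prod_pos (fun i hi => h i (Finset.mem_range.mp hi))

lemma cast_choose_two (n : ℕ) : (((n + 2).choose 2 : ℕ) : ℝ) = (n + 2) * (n + 1) / 2 := by
  induction n with
  | zero => norm_num
  | succ m ih =>
    have : (m + 3).choose 2 = (m + 2).choose 1 + (m + 2).choose 2 := Nat.choose_succ_succ _ _
    rw [this]
    push_cast [ih, Nat.choose_one_right]
    ring

lemma cast_choose_three (n : ℕ) : (((n + 3).choose 3 : ℕ) : ℝ) = (n + 3) * (n + 2) * (n + 1) / 6 := by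
  induction n with
  | zero => norm_num
  | succ m ih =>
    have : (m + 4).choose 3 = (m + 3).choose 2 + (m + 3).choose 3 := Nat.choose_succ_succ _ _
    rw [this]
    have h2 := cast_choose_two (m + 1)
    push_cast at h2 ⊢
    rw [ih]
    rw [show ((m:ℝ) + 1 + 2) = (m:ℝ) + 3 by ring] at h2
    rw [h2]
    ring

/-- For integers `d, e` with `1 < e < d - 1`, the third
simple root annihilates the Kostant vector `κᵉ` of `sl(d,ℝ)`, i.e.
`Σ_{t=1}^{e} (-1)^t C(e,t) C(e,t-1) 2^{⌊e-t} (d-4)^{⌊t-1} = 0`, if and only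
if `e⁴ - 6de² + 2e³ + 6d² - 6de + 11e² - 18d + 10e + 12 = 0`. -/
theorem stmt12 (d e : ℕ) (he1 : 1 < e) (he2 : e < d - 1) :
    (∑ t ∈ Finset.Icc 1 e,
        (-1 : ℝ) ^ t * (e.choose t : ℝ) * (e.choose (t - 1) : ℝ) *
          ffall 2 (e - t) * ffall ((d : ℝ) - 4) (t - 1) = 0) ↔
    ((e : ℝ) ^ 4 - 6 * (d : ℝ) * (e : ℝ) ^ 2 + 2 * (e : ℝ) ^ 3 + 6 * (d : ℝ) ^ 2
      - 6 * (d : ℝ) * (e : ℝ) + 11 * (e : ℝ) ^ 2 - 18 * (d : ℝ) + 10 * (e : ℝ) + 12 = 0) := by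
  have hd : e + 2 ≤ d := by omega
  rcases Nat.lt_or_ge e 3 with h3 | h3
  · -- e = 2 case
    have he : e = 2 := by omega
    subst he
    have hd4 : (4 : ℝ) ≤ (d : ℝ) := by exact_mod_cast (by omega : 4 ≤ d)
    have hIcc : Finset.Icc 1 2 = {1, 2} := by decide
    rw [hIcc, Finset.sum_insert (by decide), Finset.sum_singleton]
    norm_num [ffall_succ, ffall_zero]
    constructor
    · intro h
      have hdd : (d : ℝ) = 6 := by linarith
      rw [hdd]; ring
    · intro h
      have h0 : ((d : ℝ) - 6) * (6 * (d : ℝ) - 18) = 0 := by nlinarith [h]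
      rcases mul_eq_zero.mp h0 with h1 | h1
      · linarith
      · linarith
  · -- e = m + 3
    obtain ⟨m, rfl⟩ : ∃ m, e = m + 3 := ⟨e - 3, by omega⟩
    set x : ℝ := (d : ℝ) - 4 with hx
    have hdm : (m : ℝ) + 5 ≤ (d : ℝ) := by exact_mod_cast (by omega : m + 5 ≤ d)
    -- reduce sum to last three terms
    have hsub : Finset.Icc (m + 1) (m + 3) ⊆ Finset.Icc 1 (m + 3) := by
      intro t ht; simp only [Finset.mem_Icc] at *; omega
    have hzero : ∀ t ∈ Finset.Icc 1 (m + 3), t ∉ Finset.Icc (m + 1) (m + 3) →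
        (-1 : ℝ) ^ t * ((m+3).choose t : ℝ) * ((m+3).choose (t - 1) : ℝ) *
          ffall 2 (m + 3 - t) * ffall x (t - 1) = 0 := by
      intro t ht hnt
      simp only [Finset.mem_Icc] at ht hnt
      rw [ffall_two_eq_zero (by omega)]
      ring
    rw [← Finset.sum_subset hsub hzero]
    have hIcc : Finset.Icc (m + 1) (m + 3) = {m + 1, m + 2, m + 3} := by
      ext t; simp only [Finset.mem_Icc, Finset.mem_insert, Finset.mem_singleton]; omega
    rw [hIcc, Finset.sum_insert (by simp), Finset.sum_insert (by simp), Finset.sum_singleton]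
    -- simplify indices
    have e1 : m + 3 - (m + 1) = 2 := by omega
    have e2 : m + 3 - (m + 2) = 1 := by omega
    have e3 : m + 3 - (m + 3) = 0 := by omega
    have t1 : m + 1 - 1 = m := by omega
    have t2 : m + 2 - 1 = m + 1 := by omega
    have t3 : m + 3 - 1 = m + 2 := by omega
    rw [e1, e2, e3, t1, t2, t3]
    -- choose values
    have c3 : ((m+3).choose (m+3) : ℝ) = 1 := by rw [Nat.choose_self]; norm_num
    have c2' : ((m+3).choose (m+2) : ℝ) = (m : ℝ) + 3 := by
      rw [Nat.choose_succ_self_right]; push_cast; ring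
    have c1' : ((m+3).choose (m+1) : ℝ) = ((m:ℝ)+3) * ((m:ℝ)+2) / 2 := by
      have : (m+3).choose (m+1) = (m+3).choose 2 :=
        Nat.choose_symm (by omega : 2 ≤ m + 3)
      rw [this]
      have := cast_choose_two (m + 1)
      rw [show m + 1 + 2 = m + 3 by omega] at this
      rw [this]; push_cast; ring
    have c0' : ((m+3).choose m : ℝ) = ((m:ℝ)+3) * ((m:ℝ)+2) * ((m:ℝ)+1) / 6 := by
      have : (m+3).choose m = (m+3).choose 3 :=
        Nat.choose_symm (by omega : 3 ≤ m + 3)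
      rw [this, cast_choose_three m]
    rw [c3, c2', c1', c0']
    have f2 : ffall 2 2 = 2 := by rw [ffall_succ, ffall_succ, ffall_zero]; norm_num
    have f1 : ffall 2 1 = 2 := by rw [ffall_succ, ffall_zero]; norm_num
    have f0 : ffall 2 0 = 1 := ffall_zero 2
    rw [f2, f1, f0]
    have fx2 : ffall x (m + 2) = ffall x m * (x - m) * (x - (m + 1)) := by
      rw [ffall_succ, ffall_succ]; push_cast; ring
    have fx1 : ffall x (m + 1) = ffall x m * (x - m) := ffall_succ x m
    rw [fx2, fx1]
    -- signs
    have s2 : (-1 : ℝ) ^ (m + 2) = -(-1 : ℝ) ^ (m + 1) := by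
      rw [pow_succ]; ring
    have s3 : (-1 : ℝ) ^ (m + 3) = (-1 : ℝ) ^ (m + 1) := by
      rw [show m + 3 = (m + 1) + 2 by omega, pow_add]; norm_num
    rw [s2, s3]
    set u : ℝ := (-1 : ℝ) ^ (m + 1) with hu
    set Fm : ℝ := ffall x m with hF
    have hFpos : 0 < Fm := by
      apply ffall_pos
      intro i hi
      have : (i : ℝ) < (m : ℝ) := by exact_mod_cast hi
      rw [hx]; linarith
    have hune : u ≠ 0 := by
      rw [hu]; exact pow_ne_zero _ (by norm_num)
    set B : ℝ := 2 * (((m:ℝ)+3) * ((m:ℝ)+2) / 2) * (((m:ℝ)+3) * ((m:ℝ)+2) * ((m:ℝ)+1) / 6)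
      - 2 * ((m:ℝ)+3) * (((m:ℝ)+3) * ((m:ℝ)+2) / 2) * (x - m)
      + ((m:ℝ)+3) * (x - m) * (x - (m + 1)) with hB
    have hSB : u * (((m:ℝ)+3) * ((m:ℝ)+2) / 2) * (((m:ℝ)+3) * ((m:ℝ)+2) * ((m:ℝ)+1) / 6) * 2 * Fm
        + (-u * (((m:ℝ)+3)) * (((m:ℝ)+3) * ((m:ℝ)+2) / 2) * 2 * (Fm * (x - (m:ℝ)))
        + u * 1 * (((m:ℝ)+3)) * 1 * (Fm * (x - (m:ℝ)) * (x - ((m:ℝ) + 1))))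
        = u * Fm * B := by rw [hB]; ring
    rw [hSB]
    have hQ : 6 * B = ((m : ℝ) + 3) *
        (((m:ℝ)+3) ^ 4 - 6 * (d : ℝ) * ((m:ℝ)+3) ^ 2 + 2 * ((m:ℝ)+3) ^ 3 + 6 * (d : ℝ) ^ 2
          - 6 * (d : ℝ) * ((m:ℝ)+3) + 11 * ((m:ℝ)+3) ^ 2 - 18 * (d : ℝ) + 10 * ((m:ℝ)+3) + 12) := by
      rw [hB, hx]; push_cast; ring
    have hm3 : ((m : ℝ) + 3) ≠ 0 := by positivity
    constructor
    · intro h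
      have hB0 : B = 0 := by
        rcases mul_eq_zero.mp h with h' | h'
        · rcases mul_eq_zero.mp h' with h'' | h''
          · exact absurd h'' hune
          · exact absurd h'' (ne_of_gt hFpos)
        · exact h'
      have h60 : ((m : ℝ) + 3) *
          (((m:ℝ)+3) ^ 4 - 6 * (d : ℝ) * ((m:ℝ)+3) ^ 2 + 2 * ((m:ℝ)+3) ^ 3 + 6 * (d : ℝ) ^ 2
            - 6 * (d : ℝ) * ((m:ℝ)+3) + 11 * ((m:ℝ)+3) ^ 2 - 18 * (d : ℝ) + 10 * ((m:ℝ)+3) + 12) = 0 := by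
        rw [← hQ, hB0]; ring
      have hQ0 := (mul_eq_zero.mp h60).resolve_left hm3
      push_cast
      linarith [hQ0]
    · intro h
      push_cast at h
      have hB0 : B = 0 := by
        have h6 : 6 * B = 0 := by rw [hQ]; linear_combination ((m:ℝ)+3) * h
        linarith
      rw [hB0]; ring
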